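/- arXiv:1611.06357 — 2 statements merged into one kernel-verified Lean document; each statement's English description precedes it below -/
import Mathlib

section
/- Let n be even, m > 1, k = 2^{m−1}, and let f : 𝔽₂ⁿ → ℤ_{2^m} be an anti-self-dual bent generalized Boolean function with coefficient functions a₀,…,a_{k−1}. Define G₀,…,G_{k−1} : 𝔽₂ⁿ → ℤ pointwise by (G₀(x),…,G_{k−1}(x))ᵀ = H_{m−1}·(a₀(x),…,a_{k−1}(x))ᵀ. Then each Gᵢ takes values in {±1} and is the sign function of an anti-self-dual bent Boolean function in n variables. -/
open Finset Matrix

/-- Dot product on 𝔽₂ⁿ. -/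
def dotp {n : ℕ} (u x : Fin n → ZMod 2) : ZMod 2 := ∑ j, u j * x j

/-- The character (−1)^{u·x}. -/
def chi {n : ℕ} (u x : Fin n → ZMod 2) : ℤ := (-1) ^ (dotp u x).val

/-- Walsh–Hadamard transform of a Boolean function. -/
def Wbf {n : ℕ} (g : (Fin n → ZMod 2) → ZMod 2) (u : Fin n → ZMod 2) : ℤ :=
  ∑ x : Fin n → ZMod 2, chi u x * (-1) ^ (g x).val

/-- A Boolean function in an even number `n` of variables is bent. -/
def IsBentBF {n : ℕ} (g : (Fin n → ZMod 2) → ZMod 2) : Prop :=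
  ∀ u, Wbf g u = 2 ^ (n / 2) ∨ Wbf g u = -(2 ^ (n / 2))

/-- `ghat` is the dual of the bent Boolean function `g`. -/
def IsDualBF {n : ℕ} (g ghat : (Fin n → ZMod 2) → ZMod 2) : Prop :=
  ∀ u, Wbf g u = 2 ^ (n / 2) * (-1) ^ (ghat u).val

/-- Walsh–Hadamard transform of a generalized Boolean function. -/
noncomputable def Wgbf {n m : ℕ} (ω : ℂ) (f : (Fin n → ZMod 2) → ZMod (2 ^ m)) (u : Fin n → ZMod 2) : ℂ :=
  ∑ x : Fin n → ZMod 2, (chi u x : ℂ) * ω ^ (f x).val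

/-- A generalized Boolean function is bent. -/
def IsGBent {n m : ℕ} (ω : ℂ) (f : (Fin n → ZMod 2) → ZMod (2 ^ m)) : Prop :=
  ∀ u, ‖Wgbf ω f u‖ = Real.sqrt 2 ^ n

/-- A generalized Boolean function is regular bent. -/
def IsRegularGBent {n m : ℕ} (ω : ℂ) (f : (Fin n → ZMod 2) → ZMod (2 ^ m)) : Prop :=
  IsGBent ω f ∧ ∃ fhat : (Fin n → ZMod 2) → ZMod (2 ^ m),
    ∀ u, Wgbf ω f u = (Real.sqrt 2 : ℂ) ^ n * ω ^ (fhat u).val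

/-- The Sylvester Hadamard matrix of order 2^s. -/
def sylvester (s : ℕ) : Matrix (Fin (2 ^ s)) (Fin (2 ^ s)) ℤ :=
  Matrix.of fun i j => (-1) ^ ∑ t ∈ Finset.range s, ((i.val >>> t) % 2) * ((j.val >>> t) % 2)

/-- The Hadamard property for a system of 2^s ±1-valued functions. -/
def HadamardProperty {n : ℕ} (s : ℕ) (G : Fin (2 ^ s) → (Fin n → ZMod 2) → ℤ) : Prop :=
  ∀ x, ∃ ε : ℤ, (ε = 1 ∨ ε = -1) ∧ ∃ c : Fin (2 ^ s),
    (sylvester s).mulVec (fun i => G i x) = fun i => ε * sylvester s i c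

/-- A generalized Boolean function is anti-self-dual bent. -/
def IsAntiSelfDualGBent {n m : ℕ} (ω : ℂ) (f : (Fin n → ZMod 2) → ZMod (2 ^ m)) : Prop :=
  ∀ u, Wgbf ω f u = -((Real.sqrt 2 : ℂ) ^ n * ω ^ (f u).val)

/-- A Boolean function is anti-self-dual bent. -/
def IsAntiSelfDualBF {n : ℕ} (g : (Fin n → ZMod 2) → ZMod 2) : Prop :=
  IsBentBF g ∧ ∀ u, Wbf g u = -(2 ^ (n / 2) * (-1) ^ (g u).val)

/-!
Since `ω ^ 2 ^ (m - 1) = -1`, every power of `ω` is `±ω ^ c` with `c < 2 ^ (m - 1)`; by uniqueness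
of coefficients the coefficient vector `(a i x)ᵢ` is a signed standard basis vector, so each
`G i x` is a signed Sylvester entry, i.e. `±1`. The powers `1, ω, …, ω ^ (2 ^ (m - 1) - 1)` are
`ℤ`-linearly independent (the `2 ^ m`-th cyclotomic polynomial has degree `2 ^ (m - 1)`) and the
Walsh–Hadamard transform is `ℤ`-linear, so anti-self-duality of `f` passes to every coefficient
function `a i`, and then to the integer combinations `G i`.
-/

theorem IsPrimitiveRoot.pow_two_pow_pred_eq_neg_one {R : Type*} [CommRing R] [IsDomain R]
    {ω : R} {m : ℕ} (hω : IsPrimitiveRoot ω (2 ^ m)) (hm : 0 < m) :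
    ω ^ 2 ^ (m - 1) = -1 := by
  have h := hω.pow_of_dvd (pow_ne_zero _ two_ne_zero) (pow_dvd_pow 2 (m.sub_le 1))
  rw [Nat.pow_div (m.sub_le 1) two_pos, Nat.sub_sub_self hm, pow_one] at h
  exact h.eq_neg_one_of_two_right

theorem pow_eq_neg_one_pow_div_mul_pow_mod {M : Type*} [Monoid M] [HasDistribNeg M] {ω : M}
    {k : ℕ} (h : ω ^ k = -1) (e : ℕ) : ω ^ e = (-1) ^ (e / k) * ω ^ (e % k) := by
  conv_lhs => rw [← Nat.div_add_mod e k, pow_add, pow_mul, h]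

theorem IsPrimitiveRoot.linearIndependent_int_pow_totient {K : Type*} [Field K] [CharZero K]
    {ω : K} {N : ℕ} (hω : IsPrimitiveRoot ω N) (hN : 0 < N) :
    LinearIndependent ℤ fun i : Fin N.totient => ω ^ (i : ℕ) := by
  have hdeg : (minpoly ℚ ω).natDegree = N.totient := by
    rw [← Polynomial.cyclotomic_eq_minpoly_rat hω hN, Polynomial.natDegree_cyclotomic]
  have := (linearIndependent_pow (K := ℚ) ω).comp _ (finCongr hdeg.symm).injective
  exact this.restrict_scalars' ℤ

theorem IsPrimitiveRoot.linearIndependent_int_pow_two_pow {K : Type*} [Field K] [CharZero K]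
    {ω : K} {m : ℕ} (hω : IsPrimitiveRoot ω (2 ^ m)) (hm : 0 < m) :
    LinearIndependent ℤ fun i : Fin (2 ^ (m - 1)) => ω ^ (i : ℕ) := by
  have hk : 2 ^ (m - 1) = (2 ^ m).totient := by
    rw [Nat.totient_prime_pow Nat.prime_two hm, Nat.add_one_sub_one, mul_one]
  exact (hω.linearIndependent_int_pow_totient (by positivity)).comp _ (finCongr hk).injective

theorem eq_single_of_pow_eq_sum {k : ℕ} [NeZero k] {ω : ℂ}
    (hli : LinearIndependent ℤ fun i : Fin k => ω ^ (i : ℕ)) (hω : ω ^ k = -1)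
    {v : Fin k → ℤ} {e : ℕ} (hv : ω ^ e = ∑ i, (v i : ℂ) * ω ^ (i : ℕ)) :
    v = Pi.single (Fin.ofNat k e) ((-1) ^ (e / k)) := by
  apply hli.fintypeLinearCombination_injective
  rw [Fintype.linearCombination_apply_single, Fintype.linearCombination_apply]
  simp only [zsmul_eq_mul, ← hv, pow_eq_neg_one_pow_div_mul_pow_mod hω e]
  push_cast
  rfl

/-- `A * (chiMatrix n)ᵀ` is the Walsh–Hadamard transform of each row of `A`. -/
def chiMatrix (n : ℕ) : Matrix (Fin n → ZMod 2) (Fin n → ZMod 2) ℤ := Matrix.of chi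

theorem coords_mul_chiMatrix_transpose_eq_smul {n : ℕ} {ι : Type*} [Fintype ι] {b : ι → ℂ}
    (hb : LinearIndependent ℤ b) {F : (Fin n → ZMod 2) → ℂ} {a : Matrix ι (Fin n → ZMod 2) ℤ}
    (ha : ∀ x, F x = ∑ i, (a i x : ℂ) * b i) {c : ℤ}
    (hF : ∀ u, ∑ x, (chi u x : ℂ) * F x = c • F u) :
    a * (chiMatrix n)ᵀ = c • a := by
  set L := Fintype.linearCombination ℤ b
  have hLa : ∀ x, L (fun i => a i x) = F x := fun x => by
    simp [L, Fintype.linearCombination_apply, zsmul_eq_mul, ha]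
  ext i u
  have hrow : (fun i => (a * (chiMatrix n)ᵀ) i u) = ∑ x, chi u x • fun i => a i x := by
    ext i
    simp [mul_apply, chiMatrix, mul_comm]
  have hL : L (fun i => (a * (chiMatrix n)ᵀ) i u) = L (fun i => (c • a) i u) :=
    calc L (fun i => (a * (chiMatrix n)ᵀ) i u) = ∑ x, (chi u x : ℂ) * F x := by
          simp only [hrow, map_sum, map_zsmul, hLa]
          simp only [zsmul_eq_mul]
      _ = c • F u := hF u
      _ = L (fun i => (c • a) i u) := by
          rw [← hLa, ← map_zsmul]; rfl
  exact congrFun (hb.fintypeLinearCombination_injective hL) i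

theorem neg_one_pow_val_natCast (N : ℕ) : (-1 : ℤ) ^ (N : ZMod 2).val = (-1) ^ N := by
  rw [ZMod.val_natCast, ← neg_one_pow_eq_pow_mod_two]

theorem Complex.ofReal_sqrt_two_pow_of_even {n : ℕ} (hn : Even n) :
    (Real.sqrt 2 : ℂ) ^ n = 2 ^ (n / 2) := by
  obtain ⟨t, rfl⟩ := hn
  rw [← two_mul, pow_mul, ← Complex.ofReal_pow, Real.sq_sqrt zero_le_two,
    Nat.mul_div_cancel_left t two_pos]
  norm_num

theorem isAntiSelfDualBF_iff {n : ℕ} {g : (Fin n → ZMod 2) → ZMod 2} :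
    IsAntiSelfDualBF g ↔ ∀ u, Wbf g u = -(2 ^ (n / 2) * (-1) ^ (g u).val) := by
  refine ⟨And.right, fun h => ⟨fun u => ?_, h⟩⟩
  rcases neg_one_pow_eq_or ℤ (g u).val with hg | hg <;> simp [h u, hg]

/-- decomposition of an anti-self-dual bent gBF into anti-self-dual
bent Boolean functions. -/
theorem decomposition_of_antiselfdual_gbent {n m : ℕ} (hn : Even n) (hm : 1 < m)
    (ω : ℂ) (hω : IsPrimitiveRoot ω (2 ^ m))
    (f : (Fin n → ZMod 2) → ZMod (2 ^ m)) (hf : IsAntiSelfDualGBent ω f)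
    (a : Fin (2 ^ (m - 1)) → (Fin n → ZMod 2) → ℤ)
    (ha : ∀ x, ω ^ (f x).val = ∑ i : Fin (2 ^ (m - 1)), (a i x : ℂ) * ω ^ (i : ℕ))
    (G : Fin (2 ^ (m - 1)) → (Fin n → ZMod 2) → ℤ)
    (hG : ∀ x, (fun i => G i x) = (sylvester (m - 1)).mulVec fun i => a i x) :
    (∀ i x, G i x = 1 ∨ G i x = -1) ∧
    ∃ g : Fin (2 ^ (m - 1)) → (Fin n → ZMod 2) → ZMod 2,
      (∀ i x, G i x = (-1) ^ (g i x).val) ∧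
      (∀ i, IsAntiSelfDualBF (g i)) := by
  have hm0 : 0 < m := by omega
  have hli := hω.linearIndependent_int_pow_two_pow hm0
  have hsign : ∀ i x, ∃ N : ℕ, G i x = (-1) ^ N := fun i x => by
    rw [show G i x = _ from congrFun (hG x) i,
      eq_single_of_pow_eq_sum hli (hω.pow_two_pow_pred_eq_neg_one hm0) (ha x)]
    simp only [mulVec_single, Pi.smul_apply, col_apply, sylvester, of_apply, op_smul_eq_mul]
    exact ⟨_, (pow_add _ _ _).symm⟩
  choose N hN using hsign
  have hWa : of a * (chiMatrix n)ᵀ = -2 ^ (n / 2) • of a :=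
    coords_mul_chiMatrix_transpose_eq_smul hli ha fun u => by
      rw [← Wgbf, hf u, Complex.ofReal_sqrt_two_pow_of_even hn]
      ring
  have hWG : of G * (chiMatrix n)ᵀ = -2 ^ (n / 2) • of G := by
    have hGa : of G = sylvester (m - 1) * of a := funext₂ fun i x => congrFun (hG x) i
    rw [hGa, Matrix.mul_assoc, hWa, Matrix.mul_smul]
  refine ⟨fun i x => hN i x ▸ neg_one_pow_eq_or ℤ _, fun i x => N i x,
    fun i x => by rw [hN, neg_one_pow_val_natCast], fun i => isAntiSelfDualBF_iff.2 fun u => ?_⟩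
  have hWi := congrFun (congrFun hWG i) u
  simp only [mul_apply, transpose_apply, chiMatrix, of_apply, Matrix.smul_apply, smul_eq_mul] at hWi
  simp only [Wbf, neg_one_pow_val_natCast, ← hN, mul_comm (chi u _), hWi]
  ring
end

section
/- Let n be even, m > 1, k = 2^{m−1}, and let f : 𝔽₂ⁿ → ℤ_{2^m} be a regular bent generalized Boolean function with dual f̂. Let a₀,…,a_{k−1} be the coefficient functions of f and b₀,…,b_{k−1} the coefficient functions of f̂. Then for every index i ∈ {0,…,k−1} and every u ∈ 𝔽₂ⁿ, Σ_{x∈𝔽₂ⁿ} (−1)^{u·x} aᵢ(x) = 2^{n/2} bᵢ(u). -/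
open Finset Matrix

/-!
Expanding `ω ^ f x` in the coefficient functions `aᵢ` writes `Wgbf ω f u` as `∑ᵢ Aᵢ(u) ωⁱ`, where
`Aᵢ` is the integer Walsh transform of `aᵢ`; regularity writes the same number as
`∑ᵢ 2^{n/2} bᵢ(u) ωⁱ`. Since `1, ω, …, ω^{2^{m-1}-1}` are linearly independent over `ℚ`
(the minimal polynomial of `ω` is the cyclotomic polynomial of degree `φ(2^m) = 2^{m-1}`),
the integer coefficients agree.
-/

theorem IsPrimitiveRoot.natDegree_minpoly_rat_of_two_pow {K : Type*} [Field K] [CharZero K]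
    {ω : K} {m : ℕ} (hm : 0 < m) (hω : IsPrimitiveRoot ω (2 ^ m)) :
    (minpoly ℚ ω).natDegree = 2 ^ (m - 1) := by
  rw [← Polynomial.cyclotomic_eq_minpoly_rat hω (pow_pos two_pos m),
    Polynomial.natDegree_cyclotomic, Nat.totient_prime_pow Nat.prime_two hm]
  simp

theorem eq_of_sum_intCast_mul_pow_eq {K : Type*} [Field K] [CharZero K] {ω : K} {d : ℕ}
    (hd : (minpoly ℚ ω).natDegree = d) {c c' : Fin d → ℤ}
    (h : ∑ i, (c i : K) * ω ^ (i : ℕ) = ∑ i, (c' i : K) * ω ^ (i : ℕ)) : c = c' := by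
  subst hd
  have hli : LinearIndependent ℤ fun i : Fin (minpoly ℚ ω).natDegree => ω ^ (i : ℕ) :=
    (linearIndependent_pow ω).restrict_scalars' ℤ
  exact funext (Fintype.linearIndependent_iffₛ.1 hli c c' (by simpa only [zsmul_eq_mul] using h))

theorem Wgbf_eq_sum_walsh_coeff_mul_pow {n m d : ℕ} (ω : ℂ) (f : (Fin n → ZMod 2) → ZMod (2 ^ m))
    (a : Fin d → (Fin n → ZMod 2) → ℤ)
    (ha : ∀ x, ω ^ (f x).val = ∑ i : Fin d, (a i x : ℂ) * ω ^ (i : ℕ)) (u : Fin n → ZMod 2) :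
    Wgbf ω f u = ∑ i : Fin d, ((∑ x, chi u x * a i x : ℤ) : ℂ) * ω ^ (i : ℕ) := by
  simp only [Wgbf, ha, mul_sum, Int.cast_sum, Int.cast_mul, sum_mul]
  rw [sum_comm]
  exact sum_congr rfl fun i _ => sum_congr rfl fun x _ => by ring

theorem coefficient_WHT_of_regular_gbent_general {n m : ℕ} (hn : Even n) (hm : 1 < m)
    (ω : ℂ) (hω : IsPrimitiveRoot ω (2 ^ m))
    (f fhat : (Fin n → ZMod 2) → ZMod (2 ^ m))
    (hreg : ∀ u, Wgbf ω f u = (Real.sqrt 2 : ℂ) ^ n * ω ^ (fhat u).val)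
    (a b : Fin (2 ^ (m - 1)) → (Fin n → ZMod 2) → ℤ)
    (ha : ∀ x, ω ^ (f x).val = ∑ i : Fin (2 ^ (m - 1)), (a i x : ℂ) * ω ^ (i : ℕ))
    (hb : ∀ u, ω ^ (fhat u).val = ∑ i : Fin (2 ^ (m - 1)), (b i u : ℂ) * ω ^ (i : ℕ)) :
    ∀ (i : Fin (2 ^ (m - 1))) (u : Fin n → ZMod 2),
      ∑ x : Fin n → ZMod 2, chi u x * a i x = 2 ^ (n / 2) * b i u := by
  intro i u
  have hcoeffs : ∑ j, ((∑ x, chi u x * a j x : ℤ) : ℂ) * ω ^ (j : ℕ)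
      = ∑ j, ((2 ^ (n / 2) * b j u : ℤ) : ℂ) * ω ^ (j : ℕ) := calc
    ∑ j, ((∑ x, chi u x * a j x : ℤ) : ℂ) * ω ^ (j : ℕ)
      = Wgbf ω f u := (Wgbf_eq_sum_walsh_coeff_mul_pow ω f a ha u).symm
    _ = 2 ^ (n / 2) * ∑ j, (b j u : ℂ) * ω ^ (j : ℕ) := by
      rw [hreg u, Complex.ofReal_sqrt_two_pow_of_even hn, hb u]
    _ = ∑ j, ((2 ^ (n / 2) * b j u : ℤ) : ℂ) * ω ^ (j : ℕ) := by
      rw [mul_sum]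
      exact sum_congr rfl fun j _ => by push_cast; ring
  exact congrFun (eq_of_sum_intCast_mul_pow_eq
    (hω.natDegree_minpoly_rat_of_two_pow (by omega)) hcoeffs) i

/-- the WHT of each coefficient function of a regular bent gBF equals
2^{n/2} times the corresponding coefficient function of the dual. -/
theorem coefficient_WHT_of_regular_gbent {n m : ℕ} (hn : Even n) (hm : 1 < m)
    (ω : ℂ) (hω : IsPrimitiveRoot ω (2 ^ m))
    (f fhat : (Fin n → ZMod 2) → ZMod (2 ^ m))
    (hbent : IsGBent ω f)
    (hreg : ∀ u, Wgbf ω f u = (Real.sqrt 2 : ℂ) ^ n * ω ^ (fhat u).val)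
    (a b : Fin (2 ^ (m - 1)) → (Fin n → ZMod 2) → ℤ)
    (ha : ∀ x, ω ^ (f x).val = ∑ i : Fin (2 ^ (m - 1)), (a i x : ℂ) * ω ^ (i : ℕ))
    (hb : ∀ u, ω ^ (fhat u).val = ∑ i : Fin (2 ^ (m - 1)), (b i u : ℂ) * ω ^ (i : ℕ)) :
    ∀ (i : Fin (2 ^ (m - 1))) (u : Fin n → ZMod 2),
      ∑ x : Fin n → ZMod 2, chi u x * a i x = 2 ^ (n / 2) * b i u :=
  coefficient_WHT_of_regular_gbent_general hn hm ω hω f fhat hreg a b ha hb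
end
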